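/- arXiv:2510.24755 — 2 statements merged into one kernel-verified Lean document; each statement's English description precedes it below -/
import Mathlib

section
/- Let N ≥ 4 and let r = r₁r₂r₃ ∈ {0,1}³ be a single rule. For every position i with 1 ≤ i ≤ N−1, there exists a contiguous length-2 substring r' of r (r' = r₁r₂ or r' = r₂r₃) such that φ^{i,i+1}_{r'} ≥ φ^{i,i+1}_z for every z ∈ {0,1}². -/
/-- `occCount a x` : number of starting positions at which the rule `a` (a binary
string of length `k`) occurs as a contiguous substring of the binary string `x`
of length `N`.  This is the value `F_N(a)(x)` of the transform. -/
def occCount {k N : ℕ} (a : Fin k → Bool) (x : Fin N → Bool) : ℕ :=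
  ((List.range (N - k + 1)).filter
    (fun i => (List.ofFn a).isPrefixOf ((List.ofFn x).drop i))).length

/-- The duplet moment `φ^{p,q}_{x₁x₂}` for the single rule `r`:
the sum of `f_r(y) = F_N(r)(y)` over all strings `y` with `y p = x₁`, `y q = x₂`. -/
def duplet {N : ℕ} (r : Fin 3 → Bool) (p q : Fin N) (x1 x2 : Bool) : ℕ :=
  ∑ y : Fin N → Bool, if y p = x1 ∧ y q = x2 then occCount r y else 0

/-!
Counting occurrences window by window, `f_r(y)` is the number of positions `j` at which `r`
occurs in `y`, so the duplet moment at the adjacent positions `p, p + 1` is a sum over windows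
`j` of the number of strings carrying both the pair at `p` and `r` at `j`. Every cell outside
the constrained ones is free, so a window disjoint from the pair contributes `2^(N-5)` whatever
the pair is; the two windows sharing one cell with it contribute at most `2^(N-4)` each; and
the windows at `p - 1` and `p`, at least one of which exists, contribute `2^(N-3)` exactly for
the pairs `r₁r₂` and `r₀r₁` respectively. So any other pair has a moment no larger than the
better of those two.
-/

open Finset

theorem card_filter_forall_apply_eq {ι κ β : Type*} [Fintype ι] [DecidableEq ι] [Fintype κ]
    [Fintype β] [DecidableEq β] {e : κ → ι} (he : e.Injective) (v : κ → β) :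
    #{y : ι → β | ∀ m, y (e m) = v m} = Fintype.card β ^ (Fintype.card ι - Fintype.card κ) := by
  set S : ι → Finset β := fun t ↦ {b | ∀ m, e m = t → b = v m}
  have hS : ({y : ι → β | ∀ m, y (e m) = v m} : Finset _) = Fintype.piFinset S := by
    ext y
    simp only [S, mem_filter, mem_univ, true_and, Fintype.mem_piFinset]
    exact ⟨fun h _ m hm ↦ hm ▸ h m, fun h m ↦ h _ m rfl⟩
  have hcard : ∀ t, #(S t) = if t ∈ univ.image e then 1 else Fintype.card β := by
    intro t
    split_ifs with ht
    · obtain ⟨m, -, rfl⟩ := mem_image.mp ht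
      exact card_eq_one.mpr ⟨v m, by ext b; simp [S, he.eq_iff]⟩
    · have : S t = univ := by
        ext b
        simp only [S, mem_filter, mem_univ, true_and, iff_true]
        exact fun m hm ↦ absurd (mem_image.mpr ⟨m, mem_univ _, hm⟩) ht
      rw [this, card_univ]
  rw [hS, Fintype.card_piFinset, Fintype.prod_congr _ _ hcard, prod_ite, prod_const_one, one_mul,
    prod_const, filter_not, filter_mem_eq_inter, univ_inter, ← compl_eq_univ_sdiff, card_compl,
    card_image_of_injective _ he, card_univ]

theorem card_filter_const_and {α : Type*} (s : Finset α) (c : Prop) [Decidable c] (q : α → Prop)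
    [DecidablePred q] : #{x ∈ s | c ∧ q x} = if c then #{x ∈ s | q x} else 0 := by
  split_ifs <;> simp [*]

theorem sum_range_ite_add_eq {M : Type*} [AddCommMonoid M] (n c d : ℕ) (a : M) :
    ∑ j ∈ range n, (if j + c = d then a else 0) = if c ≤ d ∧ d < n + c then a else 0 := by
  split_ifs with h
  · rw [sum_congr rfl fun j _ ↦ if_congr (show j + c = d ↔ d - c = j by omega) rfl rfl,
      sum_ite_eq, if_pos (mem_range.mpr (by omega))]
  · exact sum_eq_zero fun j hj ↦ if_neg (by rw [mem_range] at hj; omega)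

theorem Fin.mk_add_injective {k N a : ℕ} (h : a + k ≤ N) :
    Function.Injective fun m : Fin k ↦ (⟨a + m, by omega⟩ : Fin N) :=
  fun m m' hm ↦ Fin.ext (by simpa using hm)

def OccursAt {k N : ℕ} (a : Fin k → Bool) (x : Fin N → Bool) (j : ℕ) : Prop :=
  ∃ h : j + k ≤ N, ∀ m : Fin k, x ⟨j + m, by omega⟩ = a m

instance {k N : ℕ} (a : Fin k → Bool) (x : Fin N → Bool) : DecidablePred (OccursAt a x) :=
  fun _ ↦ inferInstanceAs (Decidable (∃ _, _))

theorem isPrefixOf_ofFn_drop_iff_occursAt {k N j : ℕ} (a : Fin k → Bool) (x : Fin N → Bool)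
    (hj : j ≤ N) : (List.ofFn a).isPrefixOf ((List.ofFn x).drop j) ↔ OccursAt a x j := by
  rw [List.isPrefixOf_iff_prefix, List.prefix_iff_getElem]
  simp only [List.length_ofFn, List.length_drop, List.getElem_ofFn, List.getElem_drop, OccursAt]
  constructor
  · rintro ⟨h, ha⟩
    exact ⟨by omega, fun m ↦ (ha m m.2).symm⟩
  · rintro ⟨h, ha⟩
    exact ⟨by omega, fun m hm ↦ (ha ⟨m, hm⟩).symm⟩

theorem occCount_eq_card {k N : ℕ} (a : Fin k → Bool) (x : Fin N → Bool) :
    occCount a x = #{j ∈ range (N - k + 1) | OccursAt a x j} := by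
  change _ = Multiset.card (Multiset.filter _ (Multiset.range _))
  rw [Multiset.range, Multiset.filter_coe, Multiset.coe_card, occCount]
  congr 1
  refine List.filter_congr fun j hj ↦ ?_
  rw [List.mem_range] at hj
  rw [Bool.eq_iff_iff, decide_eq_true_iff, isPrefixOf_ofFn_drop_iff_occursAt _ _ (by omega)]

theorem card_occursAt {k N a : ℕ} (w : Fin k → Bool) (h : a + k ≤ N) :
    #{y : Fin N → Bool | OccursAt w y a} = 2 ^ (N - k) := by
  rw [show 2 ^ (N - k) = Fintype.card Bool ^ (Fintype.card (Fin N) - Fintype.card (Fin k)) by simp,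
    ← card_filter_forall_apply_eq (Fin.mk_add_injective h) w]
  congr 1
  ext y
  simp [OccursAt, h]

theorem card_occursAt_and_occursAt_of_le {k l N a b : ℕ} (u : Fin k → Bool) (w : Fin l → Bool)
    (hab : a + k ≤ b) (hb : b + l ≤ N) :
    #{y : Fin N → Bool | OccursAt u y a ∧ OccursAt w y b} = 2 ^ (N - (k + l)) := by
  have he := (Fin.mk_add_injective (show a + k ≤ N by omega)).sumElim (Fin.mk_add_injective hb)
    fun m m' hm ↦ by simp only [Fin.mk.injEq] at hm; omega
  have := card_filter_forall_apply_eq he (Sum.elim u w)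
  simp only [Sum.forall, Sum.elim_inl, Sum.elim_inr, Fintype.card_sum, Fintype.card_fin,
    Fintype.card_bool] at this
  simpa [OccursAt, show a + k ≤ N by omega, hb] using this

theorem duplet_eq_sum_card {N : ℕ} (r : Fin 3 → Bool) (p q : Fin N) (z1 z2 : Bool) :
    duplet r p q z1 z2 =
      ∑ j ∈ range (N - 3 + 1), #{y : Fin N → Bool | (y p = z1 ∧ y q = z2) ∧ OccursAt r y j} := by
  simp only [duplet, occCount_eq_card, card_filter]
  rw [sum_comm]
  refine sum_congr rfl fun y _ ↦ ?_
  split_ifs with h <;> simp [h]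

section PairAndRule

variable {N : ℕ} (r : Fin 3 → Bool) (z1 z2 : Bool)

theorem card_pair_and_rule_left_overlap {j : ℕ} (h : j + 4 ≤ N) :
    #{y : Fin N → Bool | OccursAt ![z1, z2] y (j + 2) ∧ OccursAt r y j} =
      if z1 = r 2 then 2 ^ (N - 4) else 0 := by
  have key : ∀ y : Fin N → Bool, OccursAt ![z1, z2] y (j + 2) ∧ OccursAt r y j ↔
      z1 = r 2 ∧ OccursAt ![r 0, r 1, r 2, z2] y j := fun y ↦ by
    simp only [OccursAt, Fin.forall_fin_succ, Matrix.cons_val_zero, Matrix.cons_val_succ]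
    grind
  rw [filter_congr fun y _ ↦ key y, card_filter_const_and, card_occursAt (k := 4) _ h]

theorem card_pair_and_rule_suffix {j : ℕ} (h : j + 3 ≤ N) :
    #{y : Fin N → Bool | OccursAt ![z1, z2] y (j + 1) ∧ OccursAt r y j} =
      if z1 = r 1 ∧ z2 = r 2 then 2 ^ (N - 3) else 0 := by
  have key : ∀ y : Fin N → Bool, OccursAt ![z1, z2] y (j + 1) ∧ OccursAt r y j ↔
      (z1 = r 1 ∧ z2 = r 2) ∧ OccursAt r y j := fun y ↦ by
    simp only [OccursAt, Fin.forall_fin_succ, Matrix.cons_val_zero, Matrix.cons_val_succ]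
    grind
  rw [filter_congr fun y _ ↦ key y, card_filter_const_and, card_occursAt _ h]

theorem card_pair_and_rule_prefix {p : ℕ} (h : p + 3 ≤ N) :
    #{y : Fin N → Bool | OccursAt ![z1, z2] y p ∧ OccursAt r y p} =
      if z1 = r 0 ∧ z2 = r 1 then 2 ^ (N - 3) else 0 := by
  have key : ∀ y : Fin N → Bool, OccursAt ![z1, z2] y p ∧ OccursAt r y p ↔
      (z1 = r 0 ∧ z2 = r 1) ∧ OccursAt r y p := fun y ↦ by
    simp only [OccursAt, Fin.forall_fin_succ, Matrix.cons_val_zero, Matrix.cons_val_succ]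
    grind
  rw [filter_congr fun y _ ↦ key y, card_filter_const_and, card_occursAt _ h]

theorem card_pair_and_rule_right_overlap {p : ℕ} (h : p + 4 ≤ N) :
    #{y : Fin N → Bool | OccursAt ![z1, z2] y p ∧ OccursAt r y (p + 1)} =
      if z2 = r 0 then 2 ^ (N - 4) else 0 := by
  have key : ∀ y : Fin N → Bool, OccursAt ![z1, z2] y p ∧ OccursAt r y (p + 1) ↔
      z2 = r 0 ∧ OccursAt ![z1, r 0, r 1, r 2] y p := fun y ↦ by
    simp only [OccursAt, Fin.forall_fin_succ, Matrix.cons_val_zero, Matrix.cons_val_succ]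
    grind
  rw [filter_congr fun y _ ↦ key y, card_filter_const_and, card_occursAt (k := 4) _ h]

theorem card_pair_and_rule {p j : ℕ} (hp : p + 2 ≤ N) (hj : j + 3 ≤ N) :
    #{y : Fin N → Bool | OccursAt ![z1, z2] y p ∧ OccursAt r y j} =
      (if j + 2 < p ∨ p + 1 < j then 2 ^ (N - 5) else 0)
      + (if j + 2 = p then if z1 = r 2 then 2 ^ (N - 4) else 0 else 0)
      + (if j + 1 = p then if z1 = r 1 ∧ z2 = r 2 then 2 ^ (N - 3) else 0 else 0)
      + (if j = p then if z1 = r 0 ∧ z2 = r 1 then 2 ^ (N - 3) else 0 else 0)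
      + (if j = p + 1 then if z2 = r 0 then 2 ^ (N - 4) else 0 else 0) := by
  rcases (by omega : j + 2 < p ∨ p + 1 < j ∨ j + 2 = p ∨ j + 1 = p ∨ j = p ∨ j = p + 1)
    with h | h | rfl | rfl | rfl | rfl
  · simp_rw [and_comm (a := OccursAt ![z1, z2] _ p)]
    rw [card_occursAt_and_occursAt_of_le r _ (by omega) hp]
    simp (disch := omega) only [if_pos, if_neg, add_zero]
  · rw [card_occursAt_and_occursAt_of_le _ r (by omega) hj]
    simp (disch := omega) only [if_pos, if_neg, add_zero]
  · rw [card_pair_and_rule_left_overlap r z1 z2 hp]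
    simp (disch := omega) only [if_pos, if_neg, ↓reduceIte, add_zero, zero_add]
  · rw [card_pair_and_rule_suffix r z1 z2 hj]
    simp (disch := omega) only [if_pos, if_neg, ↓reduceIte, add_zero, zero_add]
  · rw [card_pair_and_rule_prefix r z1 z2 hj]
    simp (disch := omega) only [if_pos, if_neg, ↓reduceIte, add_zero, zero_add]
  · rw [card_pair_and_rule_right_overlap r z1 z2 hj]
    simp (disch := omega) only [if_pos, if_neg, ↓reduceIte, add_zero, zero_add]

theorem duplet_adjacent_eq {p : ℕ} (hN : 3 ≤ N) (hp : p + 2 ≤ N) :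
    duplet r (⟨p, by omega⟩ : Fin N) ⟨p + 1, by omega⟩ z1 z2 =
      (∑ j ∈ range (N - 2), if j + 2 < p ∨ p + 1 < j then 2 ^ (N - 5) else 0)
      + (if 2 ≤ p ∧ z1 = r 2 then 2 ^ (N - 4) else 0)
      + (if 1 ≤ p ∧ z1 = r 1 ∧ z2 = r 2 then 2 ^ (N - 3) else 0)
      + (if p + 3 ≤ N ∧ z1 = r 0 ∧ z2 = r 1 then 2 ^ (N - 3) else 0)
      + (if p + 4 ≤ N ∧ z2 = r 0 then 2 ^ (N - 4) else 0) := by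
  have hpair : ∀ y : Fin N → Bool, (y ⟨p, by omega⟩ = z1 ∧ y ⟨p + 1, by omega⟩ = z2) ↔
      OccursAt ![z1, z2] y p := by
    intro y; simp [OccursAt, Fin.forall_fin_succ, hp]
  rw [duplet_eq_sum_card, show N - 3 + 1 = N - 2 by omega]
  simp_rw [hpair]
  rw [sum_congr rfl fun j hj ↦
    card_pair_and_rule (j := j) r z1 z2 hp (by rw [mem_range] at hj; omega)]
  have h3 : p < N - 2 ↔ p + 3 ≤ N := by omega
  have h4 : p + 1 < N - 2 ↔ p + 4 ≤ N := by omega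
  simp only [sum_add_distrib, sum_range_ite_add_eq, sum_ite_eq', mem_range, ite_and, h3, h4,
    show p < N - 2 + 2 by omega, show p < N - 2 + 1 by omega, if_true]

theorem duplet_adjacent_le_max {p : ℕ} (hN : 4 ≤ N) (hp : p + 2 ≤ N) :
    duplet r (⟨p, by omega⟩ : Fin N) ⟨p + 1, by omega⟩ z1 z2 ≤
      max (duplet r (⟨p, by omega⟩ : Fin N) ⟨p + 1, by omega⟩ (r 0) (r 1))
        (duplet r (⟨p, by omega⟩ : Fin N) ⟨p + 1, by omega⟩ (r 1) (r 2)) := by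
  by_cases hA : z1 = r 0 ∧ z2 = r 1
  · obtain ⟨rfl, rfl⟩ := hA; exact le_max_left _ _
  by_cases hB : z1 = r 1 ∧ z2 = r 2
  · obtain ⟨rfl, rfl⟩ := hB; exact le_max_right _ _
  have h2u : 2 ^ (N - 3) = 2 * 2 ^ (N - 4) := by
    rw [← pow_succ']; congr 1; omega
  have hu : ∀ (c : Prop) [Decidable c], (if c then 2 ^ (N - 4) else 0) ≤ 2 ^ (N - 4) :=
    fun c _ ↦ by split <;> omega
  set S := ∑ j ∈ range (N - 2), if j + 2 < p ∨ p + 1 < j then 2 ^ (N - 5) else 0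
  have hz : duplet r (⟨p, by omega⟩ : Fin N) ⟨p + 1, by omega⟩ z1 z2 ≤ S + 2 * 2 ^ (N - 4) := by
    simp only [duplet_adjacent_eq r z1 z2 (by omega) hp, hA, hB, and_false, if_false, add_zero]
    have := hu (2 ≤ p ∧ z1 = r 2)
    have := hu (p + 4 ≤ N ∧ z2 = r 0)
    omega
  refine hz.trans ?_
  rcases (by omega : 1 ≤ p ∨ p + 3 ≤ N) with h | h
  · refine le_max_of_le_right ?_
    rw [duplet_adjacent_eq r _ _ (by omega) hp,
      if_pos (show 1 ≤ p ∧ r 1 = r 1 ∧ r 2 = r 2 from ⟨h, rfl, rfl⟩), h2u]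
    omega
  · refine le_max_of_le_left ?_
    rw [duplet_adjacent_eq r _ _ (by omega) hp,
      if_pos (show p + 3 ≤ N ∧ r 0 = r 0 ∧ r 1 = r 1 from ⟨h, rfl, rfl⟩), h2u]
    omega

end PairAndRule

theorem stmt1 (N : ℕ) (hN : 4 ≤ N) (r : Fin 3 → Bool)
    (i : ℕ) (hi1 : 1 ≤ i) (hi2 : i ≤ N - 1) :
    ∃ x1 x2 : Bool, ((x1 = r 0 ∧ x2 = r 1) ∨ (x1 = r 1 ∧ x2 = r 2)) ∧
      ∀ z1 z2 : Bool,
        duplet r (⟨i - 1, by omega⟩ : Fin N) (⟨i, by omega⟩ : Fin N) z1 z2 ≤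
          duplet r (⟨i - 1, by omega⟩ : Fin N) (⟨i, by omega⟩ : Fin N) x1 x2 := by
  obtain ⟨p, rfl⟩ : ∃ p, i = p + 1 := ⟨i - 1, by omega⟩
  simp only [Nat.add_sub_cancel]
  have hle := fun z1 z2 ↦ duplet_adjacent_le_max r z1 z2 hN (by omega : p + 2 ≤ N)
  rcases le_total (duplet r (⟨p, by omega⟩ : Fin N) ⟨p + 1, by omega⟩ (r 0) (r 1))
    (duplet r (⟨p, by omega⟩ : Fin N) ⟨p + 1, by omega⟩ (r 1) (r 2)) with h | h
  · exact ⟨r 1, r 2, Or.inr ⟨rfl, rfl⟩, fun z1 z2 ↦ (hle z1 z2).trans (max_le h le_rfl)⟩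
  · exact ⟨r 0, r 1, Or.inl ⟨rfl, rfl⟩, fun z1 z2 ↦ (hle z1 z2).trans (max_le le_rfl h)⟩
end

section
/- For every integer N ≥ 1, the number s_N of binary strings of length N that contain exactly one occurrence of 001 as a contiguous substring satisfies the explicit formula s_N = Σ_{k=1}^{⌊N/3⌋} (−1)^{k+1} · C(N−2k, k) · k · 2^{N−3k}, where C(·,·) denotes the binomial coefficient. -/
/-- The string `001` (with `0 = false`, `1 = true`). -/
def rule001 : Fin 3 → Bool := ![false, false, true]

/-- `sCount N` : the number of binary strings of length `N` containing exactly one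
occurrence of `001` as a contiguous substring. -/
def sCount (N : ℕ) : ℕ :=
  (Finset.univ.filter fun x : Fin N → Bool => occCount rule001 x = 1).card

/- ## Basic list lemmas -/

theorem list_filter_range (n : ℕ) (f : ℕ → Bool) :
    ((List.range n).filter f).length = ((Finset.range n).filter (fun i => f i = true)).card := by
  rw [Finset.card_filter]
  induction n with
  | zero => simp
  | succ m ih =>
    rw [Finset.sum_range_succ, List.range_succ, List.filter_append, List.length_append, ih]
    cases h : f m <;> simp [List.filter, h]

theorem prefix_char (l : List Bool) : [false,false,true].isPrefixOf l = true ↔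
    (l[0]? = some false ∧ l[1]? = some false ∧ l[2]? = some true) := by
  rcases l with _ | ⟨a, _ | ⟨b, _ | ⟨c, rest⟩⟩⟩ <;> simp [List.isPrefixOf]

/- ## occSet -/

def bext {N : ℕ} (x : Fin N → Bool) (j : ℕ) : Bool := if h : j < N then x ⟨j, h⟩ else true

theorem bext_lt {N : ℕ} (x : Fin N → Bool) (j : ℕ) (h : j < N) : bext x j = x ⟨j, h⟩ := dif_pos h

theorem ofFnNthVal_eq {N : ℕ} (x : Fin N → Bool) (j : ℕ) (b : Bool) :
    List.ofFnNthVal x j = some b ↔ (j < N ∧ bext x j = b) := by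
  unfold List.ofFnNthVal bext
  split_ifs with h <;> simp [h]

def occP {N : ℕ} (x : Fin N → Bool) (i : ℕ) : Prop :=
  i + 2 < N ∧ bext x i = false ∧ bext x (i+1) = false ∧ bext x (i+2) = true

instance {N : ℕ} (x : Fin N → Bool) (i : ℕ) : Decidable (occP x i) := by
  unfold occP; infer_instance

def occSet {N : ℕ} (x : Fin N → Bool) : Finset ℕ :=
  (Finset.range (N-2)).filter (fun i => occP x i)

theorem occCount_eq {N : ℕ} (x : Fin N → Bool) : occCount rule001 x = (occSet x).card := by
  have h1 : List.ofFn rule001 = [false, false, true] := rfl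
  rw [occCount, h1, list_filter_range, occSet]
  congr 1
  ext i
  have hd : ∀ (j : ℕ) (b : Bool), ((if h : j < N then some (x ⟨j, h⟩) else none) = some b)
      ↔ (j < N ∧ bext x j = b) := fun j b => by unfold bext; split_ifs with h <;> simp [h]
  simp only [Finset.mem_filter, Finset.mem_range, prefix_char, List.getElem?_drop,
    List.getElem?_ofFn, Nat.add_zero, hd]
  simp only [occP]
  constructor
  · rintro ⟨hi, ⟨w0, h0⟩, ⟨w1, h1⟩, ⟨w2, h2⟩⟩
    exact ⟨by omega, by omega, h0, h1, h2⟩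
  · rintro ⟨hi, hw, h0, h1, h2⟩
    exact ⟨by omega, ⟨by omega, h0⟩, ⟨by omega, h1⟩, ⟨by omega, h2⟩⟩

/- ## Sparse sets -/

def Sparse (S : Finset ℕ) : Prop := ∀ i ∈ S, ∀ j ∈ S, i < j → i + 3 ≤ j

instance : DecidablePred Sparse := fun S => by unfold Sparse; infer_instance

def sparseK (n k : ℕ) : Finset (Finset ℕ) := ((Finset.range n).powersetCard k).filter Sparse

theorem mem_sparseK {n k : ℕ} {S : Finset ℕ} :
    S ∈ sparseK n k ↔ ((∀ i ∈ S, i < n) ∧ S.card = k ∧ Sparse S) := by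
  simp only [sparseK, Finset.mem_filter, Finset.mem_powersetCard]
  constructor
  · rintro ⟨⟨h1, h2⟩, h3⟩
    exact ⟨fun i hi => Finset.mem_range.1 (h1 hi), h2, h3⟩
  · rintro ⟨h1, h2, h3⟩
    exact ⟨⟨fun i hi => Finset.mem_range.2 (h1 i hi), h2⟩, h3⟩

theorem occSet_sparse {N : ℕ} (x : Fin N → Bool) : Sparse (occSet x) := by
  intro i hi j hj hij
  simp only [occSet, Finset.mem_filter] at hi hj
  simp only [occP] at hi hj
  obtain ⟨-, -, a0, a1, a2⟩ := hi
  obtain ⟨-, -, b0, b1, b2⟩ := hj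
  by_contra hc
  rcases (show j = i + 1 ∨ j = i + 2 by omega) with rfl | rfl
  · rw [show i+1+1 = i+2 from rfl] at b1
    rw [a2] at b1
    simp at b1
  · rw [a2] at b0
    simp at b0

theorem occSet_card_le {N : ℕ} (x : Fin N → Bool) : (occSet x).card ≤ N / 3 := by
  have h := occSet_sparse x
  calc (occSet x).card ≤ (Finset.range (N/3)).card := by
        apply Finset.card_le_card_of_injOn (fun i => i / 3)
        · intro i hi
          simp only [Finset.mem_coe, occSet, Finset.mem_filter] at hi
          simp only [occP] at hi
          simp only [Finset.mem_coe, Finset.mem_range]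
          omega
        · intro i hi j hj hij
          simp only [Finset.mem_coe] at hi hj
          dsimp only at hij
          by_contra hne
          rcases lt_or_gt_of_ne hne with hlt | hlt
          · have := h i hi j hj hlt; omega
          · have := h j hj i hi hlt; omega
    _ = N / 3 := Finset.card_range _

/- ## Counting sparse sets -/

theorem choose_aux (n k : ℕ) :
    (n + 1 + 2 - 2*(k+1)).choose (k+1) = (n + 2 - 2*(k+1)).choose (k+1) + (n - 2 + 2 - 2*k).choose k := by
  rcases Nat.lt_or_ge n 2 with hn | hn
  · rcases Nat.eq_zero_or_pos k with rfl | hk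
    · interval_cases n <;> decide
    · have z1 : (n + 1 + 2 - 2*(k+1)).choose (k+1) = 0 := Nat.choose_eq_zero_of_lt (by omega)
      have z2 : (n + 2 - 2*(k+1)).choose (k+1) = 0 := Nat.choose_eq_zero_of_lt (by omega)
      have z3 : (n - 2 + 2 - 2*k).choose k = 0 := Nat.choose_eq_zero_of_lt (by omega)
      omega
  · rcases le_or_gt (2*k + 2) n with h | h
    · have e1 : n + 1 + 2 - 2*(k+1) = (n - 2*k) + 1 := by omega
      have e2 : n + 2 - 2*(k+1) = n - 2*k := by omega
      have e3 : n - 2 + 2 - 2*k = n - 2*k := by omega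
      rw [e1, e2, e3, Nat.choose_succ_succ' (n - 2*k) k]
      omega
    · rcases Nat.lt_or_ge k 2 with hk | hk
      · have hk1 : k = 1 := by omega
        subst hk1
        interval_cases n <;> decide
      · have z1 : (n + 1 + 2 - 2*(k+1)).choose (k+1) = 0 := Nat.choose_eq_zero_of_lt (by omega)
        have z2 : (n + 2 - 2*(k+1)).choose (k+1) = 0 := Nat.choose_eq_zero_of_lt (by omega)
        have z3 : (n - 2 + 2 - 2*k).choose k = 0 := Nat.choose_eq_zero_of_lt (by omega)
        omega

theorem sparseK_recur (n k : ℕ) :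
    (sparseK (n+1) (k+1)).card = (sparseK n (k+1)).card + (sparseK (n-2) k).card := by
  rw [← Finset.card_filter_add_card_filter_not (s := sparseK (n+1) (k+1))
    (p := fun S => n ∈ S), add_comm]
  congr 1
  · congr 1
    ext S
    simp only [Finset.mem_filter, mem_sparseK]
    constructor
    · rintro ⟨⟨h1, h2, h3⟩, h4⟩
      refine ⟨fun i hi => ?_, h2, h3⟩
      have hlt := h1 i hi
      have hne : i ≠ n := fun e => h4 (e ▸ hi)
      omega
    · rintro ⟨h1, h2, h3⟩
      exact ⟨⟨fun i hi => by have := h1 i hi; omega, h2, h3⟩,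
        fun hn => by have := h1 n hn; omega⟩
  · apply Finset.card_bij (fun S _ => S.erase n)
    · rintro S hS
      simp only [Finset.mem_filter, mem_sparseK] at hS
      obtain ⟨⟨h1, h2, h3⟩, h4⟩ := hS
      rw [mem_sparseK]
      refine ⟨fun i hi => ?_, ?_, fun i hi j hj hij =>
        h3 i (Finset.mem_of_mem_erase hi) j (Finset.mem_of_mem_erase hj) hij⟩
      · have hiS := Finset.mem_of_mem_erase hi
        have hne := Finset.ne_of_mem_erase hi
        have hlt : i < n := by have := h1 i hiS; omega
        have := h3 i hiS n h4 hlt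
        omega
      · rw [Finset.card_erase_of_mem h4, h2]; omega
    · rintro S1 hS1 S2 hS2 he
      simp only [Finset.mem_filter] at hS1 hS2
      rw [← Finset.insert_erase hS1.2, ← Finset.insert_erase hS2.2, he]
    · rintro S' hS'
      rw [mem_sparseK] at hS'
      obtain ⟨h1, h2, h3⟩ := hS'
      have hnot : n ∉ S' := fun h => by have := h1 n h; omega
      refine ⟨insert n S', ?_, by rw [Finset.erase_insert hnot]⟩
      simp only [Finset.mem_filter, mem_sparseK]
      refine ⟨⟨fun i hi => ?_, ?_, fun i hi j hj hij => ?_⟩, Finset.mem_insert_self n S'⟩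
      · rw [Finset.mem_insert] at hi
        rcases hi with rfl | hi
        · omega
        · have := h1 i hi; omega
      · rw [Finset.card_insert_of_notMem hnot, h2]
      · rw [Finset.mem_insert] at hi hj
        rcases hi with rfl | hi
        · rcases hj with rfl | hj
          · omega
          · have := h1 j hj; omega
        · rcases hj with rfl | hj
          · have := h1 i hi; omega
          · exact h3 i hi j hj hij

theorem sparseK_card : ∀ k n, (sparseK n k).card = (n + 2 - 2*k).choose k := by
  intro k
  induction k with
  | zero =>
    intro n
    rw [sparseK, Finset.powersetCard_zero, Finset.filter_singleton]
    simp [Sparse]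
  | succ k ihk =>
    intro n
    induction n with
    | zero =>
      have he : sparseK 0 (k+1) = ∅ := by
        rw [Finset.eq_empty_iff_forall_notMem]
        intro S hS
        rw [mem_sparseK] at hS
        obtain ⟨h1, h2, _⟩ := hS
        have : S = ∅ := Finset.eq_empty_iff_forall_notMem.2 (fun i hi => by have := h1 i hi; omega)
        simp [this] at h2
      rw [he, Finset.card_empty]
      have e : 0 + 2 - 2*(k+1) = 0 := by omega
      rw [e, Nat.choose_eq_zero_of_lt (Nat.succ_pos k)]
    | succ m ihm =>
      rw [sparseK_recur, ihm, ihk, choose_aux]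

/- ## Pinned-coordinates counting -/

theorem card_pin {α : Type*} [Fintype α] [DecidableEq α] (s : Finset α) (g : α → Bool) :
    (Finset.univ.filter fun x : α → Bool => ∀ a ∈ s, x a = g a).card
      = 2 ^ (Fintype.card α - s.card) := by
  rw [← Fintype.card_subtype]
  have e : {x : α → Bool // ∀ a ∈ s, x a = g a} ≃ ({a : α // a ∉ s} → Bool) :=
    { toFun := fun x a => x.1 a.1
      invFun := fun y => ⟨fun a => if h : a ∈ s then g a else y ⟨a, h⟩, fun a ha => by simp [ha]⟩
      left_inv := fun x => by
        apply Subtype.ext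
        funext a
        by_cases h : a ∈ s
        · simp [h, x.2 a h]
        · simp [h]
      right_inv := fun y => by funext a; simp [a.2] }
  rw [Fintype.card_congr e]
  rw [Fintype.card_fun, Fintype.card_bool]
  congr 1
  rw [Fintype.card_subtype]
  rw [Finset.filter_not, Finset.filter_univ_mem, Finset.card_sdiff_of_subset (Finset.subset_univ s),
    Finset.card_univ]

/- ## The key count for fixed sparse S -/

theorem pin_iff {N : ℕ} (S : Finset ℕ) (hSr : ∀ i ∈ S, i < N - 2) (hSs : Sparse S)
    (x : Fin N → Bool) :
    S ⊆ occSet x ↔ ∀ a : Fin N, (a:ℕ) ∈ S.biUnion (fun i => ({i, i+1, i+2} : Finset ℕ)) →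
      x a = decide (2 ≤ (a:ℕ) ∧ (a:ℕ) - 2 ∈ S) := by
  constructor
  · intro hsub a haB
    rw [Finset.mem_biUnion] at haB
    obtain ⟨i, hiS, hai⟩ := haB
    have hio := hsub hiS
    simp only [occSet, Finset.mem_filter] at hio
    simp only [occP] at hio
    obtain ⟨-, hiN, b0, b1, b2⟩ := hio
    simp only [Finset.mem_insert, Finset.mem_singleton] at hai
    have hxa : ∀ (j : ℕ) (hj : j < N), (a : ℕ) = j → x a = bext x j := by
      intro j hj he
      rw [bext_lt x j hj]
      congr 1
      exact Fin.ext he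
    rcases hai with he | he | he
    · rw [hxa i (by omega) he, b0, he]
      symm
      apply decide_eq_false
      rintro ⟨h2, hm⟩
      have := hSs (i-2) hm i hiS (by omega)
      omega
    · rw [hxa (i+1) (by omega) he, b1, he]
      symm
      apply decide_eq_false
      rintro ⟨h2, hm⟩
      have : i + 1 - 2 = i - 1 := by omega
      rw [this] at hm
      have := hSs (i-1) hm i hiS (by omega)
      omega
    · rw [hxa (i+2) (by omega) he, b2, he]
      symm
      apply decide_eq_true
      refine ⟨by omega, ?_⟩
      rw [show i + 2 - 2 = i from by omega]
      exact hiS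
  · intro hpin i hiS
    have hilt := hSr i hiS
    have h0 : i < N := by omega
    have h1 : i + 1 < N := by omega
    have h2 : i + 2 < N := by omega
    have hmem : ∀ j : ℕ, j ∈ ({i, i+1, i+2} : Finset ℕ) →
        j ∈ S.biUnion (fun i => ({i, i+1, i+2} : Finset ℕ)) :=
      fun j hj => Finset.mem_biUnion.2 ⟨i, hiS, hj⟩
    simp only [occSet, Finset.mem_filter]
    simp only [occP]
    refine ⟨Finset.mem_range.2 hilt, by omega, ?_, ?_, ?_⟩
    · rw [bext_lt x i h0, hpin ⟨i, h0⟩ (hmem i (by simp))]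
      simp only [Fin.val_mk]
      apply decide_eq_false
      rintro ⟨hg2, hgm⟩
      have := hSs _ hgm i hiS (by omega)
      omega
    · rw [bext_lt x (i+1) h1, hpin ⟨i+1, h1⟩ (hmem (i+1) (by simp))]
      simp only [Fin.val_mk]
      apply decide_eq_false
      rintro ⟨hg2, hgm⟩
      have := hSs _ hgm i hiS (by omega)
      omega
    · rw [bext_lt x (i+2) h2, hpin ⟨i+2, h2⟩ (hmem (i+2) (by simp))]
      simp only [Fin.val_mk]
      apply decide_eq_true
      refine ⟨by omega, ?_⟩
      rw [show i + 2 - 2 = i from by omega]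
      exact hiS

theorem subset_occSet_card {N k : ℕ} (S : Finset ℕ) (hS : S ∈ sparseK (N-2) k) :
    (Finset.univ.filter fun x : Fin N → Bool => S ⊆ occSet x).card = 2 ^ (N - 3*k) := by
  rw [mem_sparseK] at hS
  obtain ⟨hSr, hSc, hSs⟩ := hS
  have hPlt : ∀ m ∈ S.biUnion (fun i => ({i, i+1, i+2} : Finset ℕ)), m < N := by
    intro m hm
    simp only [Finset.mem_biUnion, Finset.mem_insert, Finset.mem_singleton] at hm
    obtain ⟨i, hi, hc⟩ := hm
    have := hSr i hi
    omega
  have hfeq : (Finset.univ.filter fun x : Fin N → Bool => S ⊆ occSet x)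
      = (Finset.univ.filter fun x : Fin N → Bool =>
          ∀ a ∈ (S.biUnion (fun i => ({i, i+1, i+2} : Finset ℕ))).attachFin hPlt,
            x a = decide (2 ≤ (a:ℕ) ∧ (a:ℕ) - 2 ∈ S)) := by
    apply Finset.filter_congr
    intro x _
    rw [pin_iff S hSr hSs x]
    constructor
    · intro hp a ha
      exact hp a ((Finset.mem_attachFin hPlt).1 ha)
    · intro hp a ha
      exact hp a ((Finset.mem_attachFin hPlt).2 ha)
  have hBcard : (S.biUnion (fun i => ({i, i+1, i+2} : Finset ℕ))).card = 3 * k := by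
    rw [Finset.card_biUnion]
    · have : ∀ i ∈ S, ({i, i+1, i+2} : Finset ℕ).card = 3 := by
        intro i _
        rw [Finset.card_insert_of_notMem (by simp), Finset.card_insert_of_notMem (by simp),
          Finset.card_singleton]
      rw [Finset.sum_congr rfl this, Finset.sum_const, hSc, smul_eq_mul, mul_comm]
    · intro i hi j hj hij
      rw [Function.onFun, Finset.disjoint_left]
      intro a hai haj
      simp only [Finset.mem_insert, Finset.mem_singleton] at hai haj
      rcases lt_or_gt_of_ne hij with hlt | hlt
      · have := hSs i hi j hj hlt; omega
      · have := hSs j hj i hi hlt; omega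
  rw [hfeq]
  have hpin := card_pin ((S.biUnion fun i => ({i, i+1, i+2} : Finset ℕ)).attachFin hPlt)
      (fun a => decide (2 ≤ (a:ℕ) ∧ (a:ℕ) - 2 ∈ S))
  rw [Fintype.card_fin, Finset.card_attachFin, hBcard] at hpin
  rw [← hpin]
  apply Finset.card_bij (fun x _ => x) <;> simp

theorem count_k {N k : ℕ} (hN : 3 ≤ N) :
    ∑ x : Fin N → Bool, ((occSet x).card).choose k
      = (N - 2*k).choose k * 2^(N - 3*k) := by
  have step1 : ∀ x : Fin N → Bool, ((occSet x).card).choose k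
      = ∑ S ∈ sparseK (N-2) k, if S ⊆ occSet x then 1 else 0 := by
    intro x
    have hset : (occSet x).powersetCard k = (sparseK (N-2) k).filter (fun S => S ⊆ occSet x) := by
      ext S
      simp only [Finset.mem_powersetCard, Finset.mem_filter, mem_sparseK]
      constructor
      · rintro ⟨hsub, hcard⟩
        refine ⟨⟨fun i hi => ?_, hcard,
          fun i hi j hj hij => occSet_sparse x i (hsub hi) j (hsub hj) hij⟩, hsub⟩
        have := hsub hi
        simp only [occSet, Finset.mem_filter, Finset.mem_range] at this
        exact this.1
      · rintro ⟨⟨-, hcard, -⟩, hsub⟩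
        exact ⟨hsub, hcard⟩
    rw [← Finset.card_powersetCard, hset, Finset.card_filter]
  rw [Finset.sum_congr rfl (fun x _ => step1 x), Finset.sum_comm]
  have step2 : ∀ S ∈ sparseK (N-2) k,
      (∑ x : Fin N → Bool, if S ⊆ occSet x then 1 else 0) = 2^(N-3*k) := by
    intro S hS
    rw [← Finset.card_filter]
    exact subset_occSet_card S hS
  rw [Finset.sum_congr rfl step2, Finset.sum_const, smul_eq_mul, sparseK_card]
  have e : N - 2 + 2 - 2*k = N - 2*k := by omega
  rw [e]

theorem alt_sum (m M : ℕ) (h : m ≤ M) :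
    ∑ k ∈ Finset.Icc 1 M, ((-1:ℤ)^(k+1) * k * (m.choose k)) = if m = 1 then 1 else 0 := by
  have hsub : Finset.Icc 1 m ⊆ Finset.Icc 1 M := Finset.Icc_subset_Icc_right h
  rw [← Finset.sum_subset hsub (fun k hk hk2 => by
    have : m < k := by simp [Finset.mem_Icc] at hk hk2; omega
    rw [Nat.choose_eq_zero_of_lt this]; push_cast; ring)]
  rcases Nat.eq_zero_or_pos m with rfl | hm
  · rw [Finset.Icc_eq_empty (by omega), Finset.sum_empty]
    norm_num
  · obtain ⟨n, rfl⟩ : ∃ n, m = n + 1 := ⟨m - 1, by omega⟩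
    rw [← Finset.Ico_add_one_right_eq_Icc, Finset.sum_Ico_eq_sum_range, Nat.add_sub_cancel]
    have key : ∀ i : ℕ, ((-1:ℤ)^(1+i+1) * ((1+i : ℕ) : ℤ) * ((n+1).choose (1+i)))
        = ((n+1 : ℕ) : ℤ) * ((-1:ℤ)^i * (n.choose i)) := by
      intro i
      have hc : (n+1) * (n.choose i) = (n+1).choose (i+1) * (i+1) := by
        have := Nat.add_one_mul_choose_eq n i
        simpa [Nat.succ_eq_add_one] using this
      have hz : (((n:ℤ)+1) * (n.choose i)) = ((n+1).choose (i+1) : ℤ) * ((i:ℤ)+1) := by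
        exact_mod_cast hc
      have e : (1+i+1) = i + 2 := by omega
      rw [e, pow_add, show (1+i) = (i+1) from by omega]
      push_cast
      linear_combination ((-1:ℤ)^i) * hz.symm
    rw [Finset.sum_congr rfl (fun i _ => key i), ← Finset.mul_sum,
      Int.alternating_sum_range_choose]
    rcases Nat.eq_zero_or_pos n with rfl | h0
    · norm_num
    · rw [if_neg (by omega), if_neg (by omega), mul_zero]

theorem stmt7 (N : ℕ) (hN : 1 ≤ N) :
    (sCount N : ℤ) =
      ∑ k ∈ Finset.Icc 1 (N / 3),
        (-1 : ℤ) ^ (k + 1) * ((N - 2 * k).choose k : ℤ) * k * 2 ^ (N - 3 * k) := by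
  rcases Nat.lt_or_ge N 3 with h3 | h3
  · rw [show N / 3 = 0 from by omega, Finset.Icc_eq_empty (by omega), Finset.sum_empty]
    have hz : sCount N = 0 := by
      rw [sCount, Finset.card_eq_zero, Finset.filter_eq_empty_iff]
      intro x _
      rw [occCount_eq]
      have he : occSet x = ∅ := by
        rw [occSet, show N - 2 = 0 from by omega]
        simp
      rw [he]
      simp
    rw [hz]
    norm_num
  · have cast1 : (sCount N : ℤ)
        = ∑ x : Fin N → Bool, (if (occSet x).card = 1 then (1:ℤ) else 0) := by
      rw [sCount, Finset.card_filter]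
      push_cast
      apply Finset.sum_congr rfl
      intro x _
      simp [occCount_eq]
    rw [cast1]
    have main : ∀ k ∈ Finset.Icc 1 (N/3),
        ((N - 2*k).choose k : ℤ) * 2^(N - 3*k)
          = ∑ x : Fin N → Bool, (((occSet x).card.choose k : ℕ) : ℤ) := by
      intro k hk
      have := count_k (N := N) (k := k) h3
      calc ((N - 2*k).choose k : ℤ) * 2^(N - 3*k)
          = (((N - 2*k).choose k * 2^(N - 3*k) : ℕ) : ℤ) := by push_cast; ring
        _ = ∑ x : Fin N → Bool, (((occSet x).card.choose k : ℕ) : ℤ) := by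
          rw [← this]; push_cast; rfl
    symm
    calc ∑ k ∈ Finset.Icc 1 (N / 3),
          (-1 : ℤ) ^ (k + 1) * ((N - 2 * k).choose k : ℤ) * k * 2 ^ (N - 3 * k)
        = ∑ k ∈ Finset.Icc 1 (N / 3),
          ∑ x : Fin N → Bool, (-1 : ℤ) ^ (k + 1) * k * ((occSet x).card.choose k : ℤ) := by
          apply Finset.sum_congr rfl
          intro k hk
          rw [← Finset.mul_sum, ← main k hk]
          ring
      _ = ∑ x : Fin N → Bool,
          ∑ k ∈ Finset.Icc 1 (N / 3), (-1 : ℤ) ^ (k + 1) * k * ((occSet x).card.choose k : ℤ) :=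
          Finset.sum_comm
      _ = ∑ x : Fin N → Bool, (if (occSet x).card = 1 then (1:ℤ) else 0) := by
          apply Finset.sum_congr rfl
          intro x _
          exact alt_sum ((occSet x).card) (N/3) (occSet_card_le x)
end
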